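/- Let Y be a countable type, let π_base be a probability mass function on Y, let r : Y → {0,1}, and set Z := ∑_y π_base(y)·r(y); assume 0 < Z ≤ 1. For β > 0 define Z_β := ∑_y π_base(y)·exp(r(y)/β), p_β(y) := π_base(y)·exp(r(y)/β)/Z_β, and ε := exp(−1/β)·(1 − Z). Then for every y ∈ Y: if r(y) = 1 then p_β(y) = π_base(y)/(Z + ε), and if r(y) = 0 then p_β(y) = exp(−1/β)·π_base(y)/(Z + ε). -/

import Mathlib

/-!
Since `r` takes only the values `0` and `1`, every function of `r y` is affine in `r y`:
`g (r y) = g 0 + (g 1 - g 0) * r y`. Summing against `π_base` gives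
`Z_β = (1 - Z) + exp (1/β) * Z`, i.e. `Z + ε = exp (-1/β) * Z_β`, and both closed forms are
then `p_β (y) = π_base (y) * exp (r y / β) / Z_β` with numerator and denominator rescaled by
`exp (-1/β)`.
-/

open Real

theorem summable_of_tsum_ne_zero {Y : Type*} {f : Y → ℝ} (h : ∑' y, f y ≠ 0) : Summable f := by
  by_contra hf
  exact h (tsum_eq_zero_of_not_summable hf)

theorem mul_eq_indicator_of_binary {Y : Type*} (p : Y → ℝ) {r : Y → ℝ}
    (hr : ∀ y, r y = 0 ∨ r y = 1) :
    (fun y => p y * r y) = {y | r y = 1}.indicator p := by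
  funext y
  rcases hr y with h | h <;> simp [h]

theorem tsum_mul_comp_of_binary {Y : Type*} {p r : Y → ℝ} (hp : Summable p)
    (hr : ∀ y, r y = 0 ∨ r y = 1) (g : ℝ → ℝ) :
    ∑' y, p y * g (r y) = g 0 * ∑' y, p y + (g 1 - g 0) * ∑' y, p y * r y := by
  have hpr : Summable fun y => p y * r y := by
    rw [mul_eq_indicator_of_binary p hr]
    exact hp.indicator _
  have hg : ∀ y, p y * g (r y) = g 0 * p y + (g 1 - g 0) * (p y * r y) := by
    intro y
    rcases hr y with h | h <;> rw [h] <;> ring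
  rw [tsum_congr hg, (hp.mul_left _).tsum_add (hpr.mul_left _), tsum_mul_left, tsum_mul_left]

theorem stmt_5_general {Y : Type*}
    (pbase : Y → ℝ) (hsum : ∑' y, pbase y = 1)
    (r : Y → ℝ) (hr : ∀ y, r y = 0 ∨ r y = 1)
    (Z : ℝ) (hZ : Z = ∑' y, pbase y * r y)
    (β : ℝ)
    (Zβ : ℝ) (hZβ : Zβ = ∑' y, pbase y * Real.exp (r y / β))
    (pβ : Y → ℝ) (hpβ : ∀ y, pβ y = pbase y * Real.exp (r y / β) / Zβ)
    (ε : ℝ) (hε : ε = Real.exp (-1 / β) * (1 - Z)) :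
    ∀ y, (r y = 1 → pβ y = pbase y / (Z + ε))
       ∧ (r y = 0 → pβ y = Real.exp (-1 / β) * pbase y / (Z + ε)) := by
  have hp : Summable pbase := summable_of_tsum_ne_zero (by rw [hsum]; exact one_ne_zero)
  have hZβ_eq : Zβ = 1 - Z + exp (1 / β) * Z := by
    rw [hZβ, tsum_mul_comp_of_binary hp hr (fun x => exp (x / β)), hsum, ← hZ]
    simp only [zero_div, exp_zero]
    ring
  have hexp : exp (-1 / β) * exp (1 / β) = 1 := by
    rw [← exp_add, neg_div, neg_add_cancel, exp_zero]
  have hZε : Z + ε = exp (-1 / β) * Zβ := by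
    rw [hε, hZβ_eq, mul_add, ← mul_assoc, hexp]
    ring
  intro y
  rw [hpβ y, hZε]
  constructor
  · intro h
    rw [h, ← div_div, div_eq_mul_inv _ (exp _), ← exp_neg, neg_div, neg_neg]
  · intro h
    rw [h, zero_div, exp_zero, mul_one, mul_div_mul_left _ _ (exp_ne_zero _)]

/-- Closed form of the Gibbs distribution `p_β` on the accepted and
rejected points. -/
theorem stmt_5 {Y : Type*} [Countable Y]
    (pbase : Y → ℝ) (hnn : ∀ y, 0 ≤ pbase y) (hsum : ∑' y, pbase y = 1)
    (r : Y → ℝ) (hr : ∀ y, r y = 0 ∨ r y = 1)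
    (Z : ℝ) (hZ : Z = ∑' y, pbase y * r y) (hZpos : 0 < Z) (hZle : Z ≤ 1)
    (β : ℝ) (hβ : 0 < β)
    (Zβ : ℝ) (hZβ : Zβ = ∑' y, pbase y * Real.exp (r y / β))
    (pβ : Y → ℝ) (hpβ : ∀ y, pβ y = pbase y * Real.exp (r y / β) / Zβ)
    (ε : ℝ) (hε : ε = Real.exp (-1 / β) * (1 - Z)) :
    ∀ y, (r y = 1 → pβ y = pbase y / (Z + ε))
       ∧ (r y = 0 → pβ y = Real.exp (-1 / β) * pbase y / (Z + ε)) :=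
  stmt_5_general pbase hsum r hr Z hZ β Zβ hZβ pβ hpβ ε hε
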